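/- Let G = (V,E) be a cactus and consider a metric weighted link instance on it with parameter p. If there exists at least one feasible link set, then there exists an optimal (minimum-cost feasible) link set F such that every node incident to a link of F is a corner node, i.e., belongs to R = R₁ ∪ R₂, where R₁ is the set of nodes of degree 2 and R₂ is the set of nodes incident to at least 3 circuits or to at least two circuits not both 2-circuits. -/

import Mathlib

open scoped Classical ENNReal

/-- The edge `e` has exactly one endpoint in `X`. -/
def CrossesEdge {V E : Type*} (ends : E → Sym2 V) (X : Finset V) (e : E) : Prop :=
  ∃ u v, ends e = s(u, v) ∧ u ∈ X ∧ v ∉ X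

/-- The number of edges with exactly one endpoint in `X`. -/
noncomputable def cutDeg {V E : Type*} [Fintype E] (ends : E → Sym2 V)
    (X : Finset V) : ℕ :=
  (Finset.univ.filter (CrossesEdge ends X)).card

/-- `C` is a circuit of the multigraph: the edge set of a simple cycle. -/
noncomputable def IsCircuit {V E : Type*} (ends : E → Sym2 V) (C : Finset E) : Prop :=
  ∃ (m : ℕ) (hm : 2 ≤ m) (e : Fin m → E) (v : Fin m → V),
    Function.Injective e ∧ Function.Injective v ∧
    (∀ i : Fin m, ends (e i) = s(v i, v ⟨(i.val + 1) % m, Nat.mod_lt _ (by omega)⟩)) ∧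
    C = Finset.image e Finset.univ

/-- The degree of a node: the number of incident edges. -/
noncomputable def mDegree {V E : Type*} [Fintype E] (ends : E → Sym2 V) (v : V) : ℕ :=
  (Finset.univ.filter (fun e : E => v ∈ ends e)).card

/-- The node `v` is incident to (lies on) the circuit `C`. -/
def IncidentCircuit {V E : Type*} (ends : E → Sym2 V) (v : V) (C : Finset E) : Prop :=
  IsCircuit ends C ∧ ∃ e ∈ C, v ∈ ends e

/-- The node `v` is incident to at least 3 circuits, or to at least two circuits not
both of which are 2-circuits. -/
def IsBranchNode {V E : Type*} (ends : E → Sym2 V) (v : V) : Prop :=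
  (∃ C₁ C₂ C₃ : Finset E, C₁ ≠ C₂ ∧ C₁ ≠ C₃ ∧ C₂ ≠ C₃ ∧
      IncidentCircuit ends v C₁ ∧ IncidentCircuit ends v C₂ ∧
      IncidentCircuit ends v C₃) ∨
  (∃ C₁ C₂ : Finset E, C₁ ≠ C₂ ∧ IncidentCircuit ends v C₁ ∧
      IncidentCircuit ends v C₂ ∧ ¬ (C₁.card = 2 ∧ C₂.card = 2))

/-- A corner node of the cactus: a node of degree 2, or a node incident to at least
3 circuits or to at least two circuits not both 2-circuits. -/
def IsCornerNode {V E : Type*} [Fintype E] (ends : E → Sym2 V) (v : V) : Prop :=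
  mDegree ends v = 2 ∨ IsBranchNode ends v

/-- `X` is a minimum cut of the cactus (a cut of value 2). -/
def IsMinCut {V E : Type*} [Fintype V] [Fintype E] (ends : E → Sym2 V)
    (X : Finset V) : Prop :=
  X ≠ ∅ ∧ X ≠ Finset.univ ∧ cutDeg ends X = 2

/-- The link `l = (u, v, t)` covers the cut `X`: exactly one of `u, v` lies in `X`. -/
def Covers {V : Type*} (l : V × V × ℕ) (X : Finset V) : Prop :=
  Xor' (l.1 ∈ X) (l.2.1 ∈ X)

/-- A link `(u, v, t)` is valid for parameter `p`. -/
def ValidLink {V : Type*} (p : ℕ) (l : V × V × ℕ) : Prop :=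
  l.1 ≠ l.2.1 ∧ 1 ≤ l.2.2 ∧ l.2.2 ≤ p

/-- The link `f` is a shadow of the link `e`: `f` has weight at least that of `e` and
every minimum cut covered by `f` is covered by `e`. -/
def IsShadow {V E : Type*} [Fintype V] [Fintype E] (ends : E → Sym2 V)
    (f e : V × V × ℕ) : Prop :=
  e.2.2 ≤ f.2.2 ∧ ∀ X : Finset V, IsMinCut ends X → Covers f X → Covers e X

/-- The weighted link instance `c` on the cactus with parameter `p` is metric. -/
def IsMetricInstance {V E : Type*} [Fintype V] [Fintype E] (ends : E → Sym2 V)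
    (p : ℕ) (c : V → V → ℕ → ℝ≥0∞) : Prop :=
  (∀ e f : V × V × ℕ, ValidLink p e → ValidLink p f → IsShadow ends f e →
      c f.1 f.2.1 f.2.2 ≤ c e.1 e.2.1 e.2.2) ∧
  (∀ u v z : V, ∀ t₁ t₂ t₃ : ℕ, u ≠ v → v ≠ z → u ≠ z →
      1 ≤ t₁ → 1 ≤ t₂ → t₃ ≤ p → t₁ + t₂ ≤ t₃ →
      c u z t₃ ≤ c u v t₁ + c v z t₂)

/-- A link set `F` is feasible: all links are valid, the total weight is at most `p`,
and every minimum cut is covered by some link of `F`. -/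
def Feasible {V E : Type*} [Fintype V] [Fintype E] (ends : E → Sym2 V) (p : ℕ)
    (F : Finset (V × V × ℕ)) : Prop :=
  (∀ l ∈ F, ValidLink p l) ∧ (∑ l ∈ F, l.2.2) ≤ p ∧
    ∀ X : Finset V, IsMinCut ends X → ∃ l ∈ F, Covers l X

/-- The total cost of a link set. -/
noncomputable def linkCost {V : Type*} (c : V → V → ℕ → ℝ≥0∞)
    (F : Finset (V × V × ℕ)) : ℝ≥0∞ :=
  ∑ l ∈ F, c l.1 l.2.1 l.2.2

/-!
Among the optimal link sets take one minimising the potential `∑ (number of non-corner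
endpoints + number of minimum cuts covered)` over its links. All edges at a non-corner node `u`
lie in two 2-circuits, towards `a` and towards `b`; removing `u` splits the cactus into the
side `A` of `a` and the side `B` of `b`, both minimum cuts. A minimum cut containing `u` contains
`A` or `B`, and it contains `a` unless it is `Aᶜ`. Let `uv` be a link with `v ∈ A`, and `xy` a
link covering `B`, with `x ∉ B ∋ y`. If `x = u`, merge `uv` and `uy` into `yv` (triangle
inequality); otherwise replace `uv` by its shadow `av`, or drop it when `a = v`. Each exchange
keeps feasibility, does not raise the cost and lowers the potential.
-/

section

open Finset

variable {V E : Type*} {ends : E → Sym2 V}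

theorem crossesEdge_iff {X : Finset V} {e : E} {x y : V} (h : ends e = s(x, y)) :
    CrossesEdge ends X e ↔ Xor (x ∈ X) (y ∈ X) := by
  constructor
  · rintro ⟨z, z', hzz, hz, hz'⟩
    rcases Sym2.eq_iff.1 (h.symm.trans hzz) with ⟨rfl, rfl⟩ | ⟨rfl, rfl⟩
    exacts [Or.inl ⟨hz, hz'⟩, Or.inr ⟨hz, hz'⟩]
  · rintro (⟨hx, hy⟩ | ⟨hy, hx⟩)
    exacts [⟨x, y, h, hx, hy⟩, ⟨y, x, h.trans Sym2.eq_swap, hy, hx⟩]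

theorem crossesEdge_compl [Fintype V] {X : Finset V} {e : E} :
    CrossesEdge ends Xᶜ e ↔ CrossesEdge ends X e := by
  induction h : ends e using Sym2.ind with
  | h x y => simp only [crossesEdge_iff h, mem_compl, xor_not_not]

theorem isMinCut_compl [Fintype V] [Fintype E] {X : Finset V} (hX : IsMinCut ends X) :
    IsMinCut ends Xᶜ := by
  obtain ⟨hne, hnu, hdeg⟩ := hX
  refine ⟨fun h => hnu (by simpa using congrArg compl h),
    fun h => hne (by simpa using congrArg compl h), ?_⟩
  simpa only [cutDeg, crossesEdge_compl] using hdeg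

theorem IsMinCut.mem_of_crossesEdge [Fintype V] [Fintype E] {X : Finset V}
    (hX : IsMinCut ends X) {C : Finset E} (hC : ∀ e ∈ C, CrossesEdge ends X e)
    (hcard : C.card = 2) {e : E} (he : CrossesEdge ends X e) : e ∈ C := by
  have hsub : C ⊆ univ.filter (CrossesEdge ends X) := fun e he =>
    mem_filter.2 ⟨mem_univ _, hC e he⟩
  rw [eq_of_subset_of_card_le hsub (by rw [hcard]; exact hX.2.2.le)]
  exact mem_filter.2 ⟨mem_univ _, he⟩

theorem forall_isMinCut_of_mem [Fintype V] [Fintype E] (u : V) {P : Finset V → Prop}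
    (hP : ∀ X, P Xᶜ → P X) (h : ∀ X, IsMinCut ends X → u ∈ X → P X) (X : Finset V)
    (hX : IsMinCut ends X) : P X := by
  by_cases hu : u ∈ X
  · exact h X hX hu
  · exact hP X (h Xᶜ (isMinCut_compl hX) (mem_compl.2 hu))

theorem covers_def {l : V × V × ℕ} {X : Finset V} :
    Covers l X ↔ Xor (l.1 ∈ X) (l.2.1 ∈ X) :=
  Iff.rfl

theorem covers_compl [Fintype V] {l : V × V × ℕ} {X : Finset V} :
    Covers l Xᶜ ↔ Covers l X := by
  simp only [covers_def, mem_compl, xor_not_not]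

theorem covers_iff_of_ends {l : V × V × ℕ} {x y : V} (h : s(l.1, l.2.1) = s(x, y))
    {X : Finset V} : Covers l X ↔ Xor (x ∈ X) (y ∈ X) := by
  rcases Sym2.eq_iff.1 h with ⟨h₁, h₂⟩ | ⟨h₁, h₂⟩
  · rw [covers_def, h₁, h₂]
  · rw [covers_def, h₁, h₂, _root_.xor_comm]

theorem exists_ends_of_covers {l : V × V × ℕ} {X : Finset V} (h : Covers l X) :
    ∃ x y, s(l.1, l.2.1) = s(x, y) ∧ x ∉ X ∧ y ∈ X := by
  rcases h with ⟨h₁, h₂⟩ | ⟨h₁, h₂⟩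
  exacts [⟨l.2.1, l.1, Sym2.eq_swap, h₂, h₁⟩, ⟨l.1, l.2.1, rfl, h₂, h₁⟩]

theorem ValidLink.ne_of_ends {p : ℕ} {l : V × V × ℕ} (hl : ValidLink p l) {x y : V}
    (h : s(l.1, l.2.1) = s(x, y)) : x ≠ y := by
  rintro rfl
  obtain ⟨h₁, h₂⟩ : l.1 = x ∧ l.2.1 = x := by simpa using h
  exact hl.1 (h₁.trans h₂.symm)

theorem cost_eq_of_ends {c : V → V → ℕ → ℝ≥0∞} (hsymm : ∀ u v t, c u v t = c v u t)
    {l : V × V × ℕ} {x y : V} (h : s(l.1, l.2.1) = s(x, y)) :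
    c l.1 l.2.1 l.2.2 = c x y l.2.2 := by
  rcases Sym2.eq_iff.1 h with ⟨h₁, h₂⟩ | ⟨h₁, h₂⟩
  · rw [h₁, h₂]
  · rw [h₁, h₂, hsymm]

def IsTwoEdgeConnected [Fintype V] [Fintype E] (ends : E → Sym2 V) : Prop :=
  ∀ X : Finset V, X ≠ ∅ → X ≠ univ → 2 ≤ cutDeg ends X

def HasUniqueCircuit (ends : E → Sym2 V) : Prop :=
  ∀ e : E, ∃! C : Finset E, IsCircuit ends C ∧ e ∈ C

theorem eq_univ_of_forall_not_crossesEdge [Fintype V] [Fintype E]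
    (h2ec : IsTwoEdgeConnected ends) {X : Finset V} (hX : X.Nonempty)
    (h : ∀ e, ¬ CrossesEdge ends X e) : X = univ := by
  by_contra hne
  have hpos : 0 < (univ.filter (CrossesEdge ends X)).card := by
    have := h2ec X hX.ne_empty hne
    unfold cutDeg at this
    omega
  obtain ⟨e, he⟩ := card_pos.1 hpos
  exact h e (mem_filter.1 he).2

theorem two_le_mDegree [Fintype V] [Fintype E] [Nontrivial V] (h2ec : IsTwoEdgeConnected ends)
    (u : V) : 2 ≤ mDegree ends u := by
  obtain ⟨w, hw⟩ := exists_ne u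
  refine (h2ec {u} (singleton_ne_empty u) fun h => hw (mem_singleton.1 (h ▸ mem_univ w))).trans
    (card_le_card fun e he => ?_)
  obtain ⟨z, z', hzz, hz, -⟩ := (mem_filter.1 he).2
  rw [mem_singleton.1 hz] at hzz
  exact mem_filter.2 ⟨mem_univ _, hzz ▸ Sym2.mem_mk_left _ _⟩

theorem isCircuit_iff {C : Finset E} :
    IsCircuit ends C ↔ ∃ (n : ℕ) (e : Fin (n + 2) → E) (v : Fin (n + 2) → V),
      e.Injective ∧ v.Injective ∧ (∀ i, ends (e i) = s(v i, v (i + 1))) ∧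
        C = univ.image e := by
  constructor
  · rintro ⟨m, hm, e, v, he, hv, hends, rfl⟩
    obtain ⟨n, rfl⟩ := Nat.exists_eq_add_of_le' hm
    refine ⟨n, e, v, he, hv, fun i => ?_, rfl⟩
    rw [hends i]
    congr 3
  · rintro ⟨n, e, v, he, hv, hends, rfl⟩
    refine ⟨n + 2, by omega, e, v, he, hv, fun i => ?_, rfl⟩
    rw [hends i]
    congr 3

open Fin.NatCast in
theorem Fin.forall_of_forall_imp_add_one {n : ℕ} {P : Fin (n + 1) → Prop}
    (h : ∀ i, P i → P (i + 1)) {i : Fin (n + 1)} (hi : P i) (j : Fin (n + 1)) : P j := by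
  have key : ∀ k : ℕ, P (i + (k : Fin (n + 1))) := by
    intro k
    induction k with
    | zero => simpa using hi
    | succ k ih => simpa [Nat.cast_succ, ← add_assoc] using h _ ih
  simpa using key (j - i).val

theorem IsCircuit.exists_crossesEdge {C : Finset E} (hC : IsCircuit ends C) {X : Finset V}
    {e₁ e₂ : E} (he₁ : e₁ ∈ C) (he₂ : e₂ ∈ C) {x y : V} (hx : x ∈ ends e₁)
    (hy : y ∈ ends e₂) (hxX : x ∈ X) (hyX : y ∉ X) : ∃ e ∈ C, CrossesEdge ends X e := by
  obtain ⟨n, e, v, -, -, hends, rfl⟩ := isCircuit_iff.1 hC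
  obtain ⟨i, -, rfl⟩ := mem_image.1 he₁
  obtain ⟨j, -, rfl⟩ := mem_image.1 he₂
  by_contra! hno
  have hstep : ∀ k, v k ∈ X → v (k + 1) ∈ X := fun k hk => by
    by_contra hk'
    exact hno _ (mem_image_of_mem _ (mem_univ k)) ⟨_, _, hends k, hk, hk'⟩
  rw [hends, Sym2.mem_iff] at hx hy
  obtain ⟨i', hi'⟩ : ∃ i', v i' ∈ X := by rcases hx with rfl | rfl <;> exact ⟨_, hxX⟩
  rcases hy with rfl | rfl <;> exact hyX (Fin.forall_of_forall_imp_add_one hstep hi' _)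

theorem IsCircuit.exists_ne_crossesEdge {C : Finset E} (hC : IsCircuit ends C) {X : Finset V}
    {e : E} (he : e ∈ C) (hX : CrossesEdge ends X e) :
    ∃ e' ∈ C, e' ≠ e ∧ CrossesEdge ends X e' := by
  obtain ⟨n, e, v, heinj, -, hends, rfl⟩ := isCircuit_iff.1 hC
  obtain ⟨i, -, rfl⟩ := mem_image.1 he
  by_contra! hno
  let χ : Fin (n + 2) → ZMod 2 := fun k => if v k ∈ X then 1 else 0
  have hterm : ∀ k, χ (k + 1) - χ k = if CrossesEdge ends X (e k) then 1 else 0 := by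
    intro k
    rw [crossesEdge_iff (hends k)]
    by_cases h₁ : v k ∈ X <;> by_cases h₂ : v (k + 1) ∈ X <;> simp [χ, h₁, h₂, Xor]
  -- the increments of `χ` around the circuit telescope to `0`, but only the `i`-th is nonzero
  have htel : ∑ k, (χ (k + 1) - χ k) = 0 := by
    rw [sum_sub_distrib]
    exact sub_eq_zero.2 (Equiv.sum_comp (Equiv.addRight 1) χ)
  rw [sum_eq_single i (fun k _ hk => by
      rw [hterm, if_neg (hno _ (mem_image_of_mem _ (mem_univ k)) (heinj.ne hk))])
    (by simp), hterm, if_pos hX] at htel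
  exact one_ne_zero htel

theorem IsCircuit.card_filter_mem_le_two {C : Finset E} (hC : IsCircuit ends C) (u : V) :
    (C.filter (u ∈ ends ·)).card ≤ 2 := by
  obtain ⟨n, e, v, -, hvinj, hends, rfl⟩ := isCircuit_iff.1 hC
  by_cases hu : ∃ i, v i = u
  · obtain ⟨i, rfl⟩ := hu
    refine (card_le_card (t := {e i, e (i - 1)}) fun g hg => ?_).trans card_le_two
    obtain ⟨hg, hig⟩ := mem_filter.1 hg
    obtain ⟨k, -, rfl⟩ := mem_image.1 hg
    rw [hends, Sym2.mem_iff] at hig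
    rcases hig with h | h
    · simp [hvinj h]
    · simp [eq_sub_of_add_eq (hvinj h).symm]
  · push Not at hu
    refine (card_le_card (t := ∅) fun g hg => ?_).trans (by simp)
    obtain ⟨hg, hig⟩ := mem_filter.1 hg
    obtain ⟨k, -, rfl⟩ := mem_image.1 hg
    rw [hends, Sym2.mem_iff] at hig
    rcases hig with h | h
    exacts [(hu k h.symm).elim, (hu _ h.symm).elim]

theorem IsCircuit.exists_ends_eq_of_card_eq_two {C : Finset E} (hC : IsCircuit ends C)
    (hcard : C.card = 2) {g : E} (hg : g ∈ C) {u : V} (hu : u ∈ ends g) :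
    ∃ a, a ≠ u ∧ ∀ e ∈ C, ends e = s(u, a) := by
  obtain ⟨n, e, v, heinj, hvinj, hends, rfl⟩ := isCircuit_iff.1 hC
  obtain rfl : n = 0 := by simpa [card_image_of_injective _ heinj] using hcard
  have hall : ∀ f ∈ univ.image e, ends f = s(v 0, v 1) := by
    simp only [mem_image, mem_univ, true_and, forall_exists_index, forall_apply_eq_imp_iff]
    intro k
    fin_cases k
    · exact hends 0
    · exact (hends 1).trans Sym2.eq_swap
  have hne : v 0 ≠ v 1 := hvinj.ne (by decide)
  rw [hall g hg, Sym2.mem_iff] at hu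
  rcases hu with rfl | rfl
  · exact ⟨v 1, hne.symm, hall⟩
  · exact ⟨v 0, hne, fun f hf => (hall f hf).trans Sym2.eq_swap⟩

theorem isCircuit_pair {p q : E} (hpq : p ≠ q) {x y : V} (hxy : x ≠ y)
    (hp : ends p = s(x, y)) (hq : ends q = s(x, y)) : IsCircuit ends {p, q} := by
  refine isCircuit_iff.2 ⟨0, ![p, q], ![x, y], ?_, ?_, fun i => ?_, ?_⟩
  · intro i j h
    fin_cases i <;> fin_cases j <;> simp_all [eq_comm]
  · intro i j h
    fin_cases i <;> fin_cases j <;> simp_all [eq_comm]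
  · fin_cases i
    · exact hp
    · exact hq.trans Sym2.eq_swap
  · ext
    simp [Fin.exists_fin_two, eq_comm]

theorem injective_sym2_mk_add_one {n : ℕ} {v : Fin (n + 3) → V} (hv : v.Injective) :
    Function.Injective fun i => s(v i, v (i + 1)) := by
  intro i j h
  rcases Sym2.eq_iff.1 h with ⟨h₁, -⟩ | ⟨h₁, h₂⟩
  · exact hv h₁
  · have h₁ := hv h₁
    have h₂ := hv h₂
    subst h₁
    rw [add_assoc, add_eq_left, Fin.ext_iff] at h₂
    simp only [Fin.val_add, Fin.val_one', Fin.val_zero] at h₂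
    rw [Nat.mod_eq_of_lt (by omega : 1 < n + 3), Nat.mod_eq_of_lt (by omega)] at h₂
    omega

theorem exists_isCircuit_of_isCycle {G : SimpleGraph V}
    (hG : ∀ x y, G.Adj x y → ∃ e, ends e = s(x, y)) {u : V} {c : G.Walk u u} (hc : c.IsCycle) :
    ∃ C, IsCircuit ends C ∧ ∀ z ∈ c.edges, ∃ e ∈ C, ends e = z := by
  obtain ⟨n, hn⟩ : ∃ n, c.length = n + 3 := ⟨c.length - 3, by have := hc.three_le_length; omega⟩
  let v : Fin (n + 3) → V := fun i => c.getVert i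
  have hsucc : ∀ i : Fin (n + 3), v (i + 1) = c.getVert (i + 1) := by
    intro i
    simp only [v, Fin.val_add_one]
    split_ifs with h
    · rw [h, Fin.val_last, ← hn, c.getVert_length, c.getVert_zero]
    · rfl
  have hadj : ∀ i : Fin (n + 3), G.Adj (v i) (v (i + 1)) := fun i =>
    hsucc i ▸ c.adj_getVert_succ (by omega)
  choose e he using fun i => hG _ _ (hadj i)
  have hvinj : v.Injective := fun i j h =>
    Fin.ext (hc.getVert_injOn' (by simp; omega) (by simp; omega) h)
  refine ⟨univ.image e, isCircuit_iff.2 ⟨n + 1, e, v, fun i j h => ?_, hvinj, he, rfl⟩,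
    fun z hz => ?_⟩
  · exact injective_sym2_mk_add_one hvinj (by simpa only [he] using congrArg ends h)
  · obtain ⟨k, hk, rfl⟩ := List.mem_iff_getElem.1 hz
    have hk' : k < n + 3 := by rwa [c.length_edges, hn] at hk
    refine ⟨e ⟨k, hk'⟩, mem_image_of_mem _ (mem_univ _), ?_⟩
    rw [he, hsucc, c.getElem_edges]

def avoidingGraph (ends : E → Sym2 V) (u : V) : SimpleGraph V :=
  SimpleGraph.fromEdgeSet (ends '' {e | u ∉ ends e})

theorem avoidingGraph_adj {u x y : V} :
    (avoidingGraph ends u).Adj x y ↔ (∃ e, u ∉ ends e ∧ ends e = s(x, y)) ∧ x ≠ y := by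
  simp [avoidingGraph]

theorem eq_of_reachable_avoidingGraph {u a : V} (h : (avoidingGraph ends u).Reachable a u) :
    a = u := by
  obtain ⟨p⟩ := h.symm
  cases p with
  | nil => rfl
  | cons hadj _ =>
    obtain ⟨⟨e, hu, he⟩, -⟩ := avoidingGraph_adj.1 hadj
    exact absurd (he ▸ Sym2.mem_mk_left _ _) hu

theorem mem_of_reachable_of_forall_not_crossesEdge {u : V} {X : Finset V}
    (hX : ∀ e, u ∉ ends e → ¬ CrossesEdge ends X e) {x w : V}
    (h : (avoidingGraph ends u).Reachable x w) (hx : x ∈ X) : w ∈ X := by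
  by_contra hw
  obtain ⟨p⟩ := h
  obtain ⟨d, -, hd₁, hd₂⟩ := p.exists_boundary_dart (X : Set V) hx hw
  obtain ⟨⟨e, he, hends⟩, -⟩ := avoidingGraph_adj.1 d.adj
  exact hX e he ⟨_, _, hends, hd₁, hd₂⟩

theorem exists_isCircuit_of_reachable_avoidingGraph {u a b : V}
    (hab : (avoidingGraph ends u).Reachable a b) (hne : a ≠ b) (hau : a ≠ u) (hbu : b ≠ u)
    (ha : ∃ e, ends e = s(u, a)) (hb : ∃ e, ends e = s(b, u)) :
    ∃ D, IsCircuit ends D ∧ (∃ e ∈ D, ends e = s(u, a)) ∧ ∃ e ∈ D, ends e = s(b, u) := by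
  -- close a path from `a` to `b` avoiding `u` into a cycle through `u`
  obtain ⟨P, hP⟩ := hab.exists_isPath
  let G := SimpleGraph.fromEdgeSet (Set.range ends)
  have hle : avoidingGraph ends u ≤ G := SimpleGraph.fromEdgeSet_mono (Set.image_subset_range _ _)
  have hua : G.Adj u a := (SimpleGraph.fromEdgeSet_adj _).2 ⟨ha, hau.symm⟩
  have hbu' : G.Adj b u := (SimpleGraph.fromEdgeSet_adj _).2 ⟨hb, hbu⟩
  have hu : u ∉ P.support := fun h => hau (eq_of_reachable_avoidingGraph ⟨P.takeUntil u h⟩)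
  let c := SimpleGraph.Walk.cons hua ((P.mapLe hle).concat hbu')
  have hc : c.IsCycle := by
    rw [SimpleGraph.Walk.cons_isCycle_iff]
    refine ⟨((SimpleGraph.Walk.isPath_mapLe hle).2 hP).concat
      (by rwa [SimpleGraph.Walk.support_mapLe_eq_support]) hbu', ?_⟩
    rw [SimpleGraph.Walk.edges_concat, List.concat_eq_append, List.mem_append,
      SimpleGraph.Walk.edges_mapLe_eq_edges]
    rintro (h | h)
    · exact hu (P.fst_mem_support_of_mem_edges h)
    · rcases Sym2.eq_iff.1 (List.mem_singleton.1 h) with ⟨-, h⟩ | ⟨-, h⟩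
      exacts [hau h, hne h]
  obtain ⟨D, hD, hDc⟩ := exists_isCircuit_of_isCycle
    (fun x y h => ((SimpleGraph.fromEdgeSet_adj _).1 h).1) hc
  exact ⟨D, hD, hDc s(u, a) (by simp [c]), hDc s(b, u) (by simp [c])⟩

section Component

variable [Fintype V]

noncomputable def avoidingComponent (ends : E → Sym2 V) (u a : V) : Finset V :=
  univ.filter ((avoidingGraph ends u).Reachable a)

variable {u a : V}

theorem mem_avoidingComponent {w : V} :
    w ∈ avoidingComponent ends u a ↔ (avoidingGraph ends u).Reachable a w := by
  simp [avoidingComponent]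

theorem mem_avoidingComponent_self : a ∈ avoidingComponent ends u a :=
  mem_avoidingComponent.2 .rfl

theorem not_mem_avoidingComponent (ha : a ≠ u) : u ∉ avoidingComponent ends u a :=
  fun h => ha (eq_of_reachable_avoidingGraph (mem_avoidingComponent.1 h))

theorem not_mem_avoidingComponent_of_not_reachable {b w : V}
    (hab : ¬ (avoidingGraph ends u).Reachable a b) (hw : w ∈ avoidingComponent ends u b) :
    w ∉ avoidingComponent ends u a := fun hwa =>
  hab ((mem_avoidingComponent.1 hwa).trans (mem_avoidingComponent.1 hw).symm)

theorem mem_avoidingComponent_of_mem {z z' : V} (hz : z ∈ avoidingComponent ends u a) {e : E}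
    (he : u ∉ ends e) (h : ends e = s(z, z')) : z' ∈ avoidingComponent ends u a := by
  by_cases hzz : z = z'
  · exact hzz ▸ hz
  · exact mem_avoidingComponent.2
      ((mem_avoidingComponent.1 hz).trans (avoidingGraph_adj.2 ⟨⟨e, he, h⟩, hzz⟩).reachable)

theorem exists_crossesEdge_of_mem_avoidingComponent {X : Finset V} (ha : a ∈ X) {w : V}
    (hw : w ∈ avoidingComponent ends u a) (hwX : w ∉ X) :
    ∃ e, u ∉ ends e ∧ CrossesEdge ends X e ∧ ∀ z ∈ ends e, z ∈ avoidingComponent ends u a := by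
  by_contra! h
  -- a crossing edge of `X ∩ avoidingComponent` that avoids `u` lies inside the component
  have hY : ∀ e, u ∉ ends e → ¬ CrossesEdge ends (X ∩ avoidingComponent ends u a) e := by
    rintro e he ⟨z, z', hzz, hz, hz'⟩
    rw [mem_inter] at hz hz'
    have hz'c := mem_avoidingComponent_of_mem hz.2 he hzz
    obtain ⟨y, hy, hyc⟩ := h e he ⟨z, z', hzz, hz.1, fun h' => hz' ⟨h', hz'c⟩⟩
    rw [hzz, Sym2.mem_iff] at hy
    rcases hy with rfl | rfl
    exacts [hyc hz.2, hyc hz'c]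
  exact hwX (mem_inter.1 (mem_of_reachable_of_forall_not_crossesEdge hY
    (mem_avoidingComponent.1 hw) (mem_inter.2 ⟨ha, mem_avoidingComponent_self⟩))).1

end Component

structure IsJunction (ends : E → Sym2 V) (u a b : V) (C₁ C₂ : Finset E) : Prop where
  isCircuit_left : IsCircuit ends C₁
  isCircuit_right : IsCircuit ends C₂
  ne : C₁ ≠ C₂
  card_left : C₁.card = 2
  card_right : C₂.card = 2
  ends_left : ∀ e ∈ C₁, ends e = s(u, a)
  ends_right : ∀ e ∈ C₂, ends e = s(u, b)
  left_ne : a ≠ u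
  right_ne : b ≠ u
  mem_or_mem : ∀ e, u ∈ ends e → e ∈ C₁ ∨ e ∈ C₂

theorem exists_isJunction_of_not_isCornerNode [Fintype V] [Fintype E] [Nontrivial V]
    (h2ec : IsTwoEdgeConnected ends) (hcactus : HasUniqueCircuit ends) {u : V}
    (hu : ¬ IsCornerNode ends u) : ∃ a b C₁ C₂, IsJunction ends u a b C₁ C₂ := by
  have hdeg := two_le_mDegree h2ec u
  obtain ⟨g₁, hg₁⟩ : ∃ g, u ∈ ends g := by
    obtain ⟨g, hg⟩ := card_pos.1 (by unfold mDegree at hdeg; omega :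
      0 < (univ.filter fun e : E => u ∈ ends e).card)
    exact ⟨g, (mem_filter.1 hg).2⟩
  obtain ⟨C₁, ⟨hC₁, hg₁C₁⟩, -⟩ := hcactus g₁
  obtain ⟨g₂, hg₂, hg₂C₁⟩ : ∃ g, u ∈ ends g ∧ g ∉ C₁ := by
    by_contra! h
    refine hu (Or.inl (le_antisymm ?_ hdeg))
    calc mDegree ends u = (C₁.filter (u ∈ ends ·)).card := by
          unfold mDegree
          congr 1
          ext e
          simpa using fun he => h e he
      _ ≤ 2 := hC₁.card_filter_mem_le_two u
  obtain ⟨C₂, ⟨hC₂, hg₂C₂⟩, -⟩ := hcactus g₂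
  have hne : C₁ ≠ C₂ := fun h => hg₂C₁ (h ▸ hg₂C₂)
  have hinc₁ : IncidentCircuit ends u C₁ := ⟨hC₁, g₁, hg₁C₁, hg₁⟩
  have hinc₂ : IncidentCircuit ends u C₂ := ⟨hC₂, g₂, hg₂C₂, hg₂⟩
  obtain ⟨hcard₁, hcard₂⟩ : C₁.card = 2 ∧ C₂.card = 2 := by
    by_contra h
    exact hu (Or.inr (Or.inr ⟨C₁, C₂, hne, hinc₁, hinc₂, h⟩))
  obtain ⟨a, ha, hends₁⟩ := hC₁.exists_ends_eq_of_card_eq_two hcard₁ hg₁C₁ hg₁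
  obtain ⟨b, hb, hends₂⟩ := hC₂.exists_ends_eq_of_card_eq_two hcard₂ hg₂C₂ hg₂
  refine ⟨a, b, C₁, C₂, hC₁, hC₂, hne, hcard₁, hcard₂, hends₁, hends₂, ha, hb, fun e he => ?_⟩
  by_contra! h
  obtain ⟨C₃, ⟨hC₃, heC₃⟩, -⟩ := hcactus e
  exact hu (Or.inr (Or.inl ⟨C₁, C₂, C₃, hne, fun h' => h.1 (h' ▸ heC₃),
    fun h' => h.2 (h' ▸ heC₃), hinc₁, hinc₂, hC₃, e, heC₃, he⟩))

/-- `A` is the side of `u` entered through the 2-circuits from `u` to `a`; the opposite side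
is `(insert u A)ᶜ`. -/
structure IsSide [Fintype V] [Fintype E] (ends : E → Sym2 V) (u a : V) (A : Finset V) :
    Prop where
  mem : a ∈ A
  not_mem : u ∉ A
  isMinCut : IsMinCut ends A
  isMinCut_compl_insert : IsMinCut ends (insert u A)ᶜ
  eq_compl : ∀ X, IsMinCut ends X → u ∈ X → a ∉ X → X = Aᶜ
  subset_or_subset : ∀ X, IsMinCut ends X → u ∈ X → A ⊆ X ∨ (insert u A)ᶜ ⊆ X

namespace IsJunction

variable {u a b : V} {C₁ C₂ : Finset E}

theorem symm (J : IsJunction ends u a b C₁ C₂) : IsJunction ends u b a C₂ C₁ :=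
  ⟨J.isCircuit_right, J.isCircuit_left, J.ne.symm, J.card_right, J.card_left, J.ends_right,
    J.ends_left, J.right_ne, J.left_ne, fun e he => (J.mem_or_mem e he).symm⟩

theorem mem_left (J : IsJunction ends u a b C₁ C₂) (hab : a ≠ b) {e : E}
    (he : ends e = s(u, a)) : e ∈ C₁ :=
  (J.mem_or_mem e (he ▸ Sym2.mem_mk_left _ _)).resolve_right fun h =>
    hab (Sym2.congr_right.1 ((J.ends_right e h).symm.trans he)).symm

theorem not_reachable (hcactus : HasUniqueCircuit ends)
    (J : IsJunction ends u a b C₁ C₂) : ¬ (avoidingGraph ends u).Reachable a b := by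
  intro hab
  suffices ∃ D, IsCircuit ends D ∧ (∃ e ∈ D, e ∈ C₁) ∧ ∃ e ∈ D, e ∈ C₂ by
    obtain ⟨D, hD, ⟨e₁, he₁D, he₁⟩, e₂, he₂D, he₂⟩ := this
    exact J.ne (((hcactus e₁).unique ⟨J.isCircuit_left, he₁⟩ ⟨hD, he₁D⟩).trans
      ((hcactus e₂).unique ⟨hD, he₂D⟩ ⟨J.isCircuit_right, he₂⟩))
  obtain ⟨p, hp⟩ := card_pos.1 (J.card_left ▸ two_pos : 0 < C₁.card)
  obtain ⟨q, hq⟩ := card_pos.1 (J.card_right ▸ two_pos : 0 < C₂.card)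
  by_cases hba : a = b
  · subst hba
    have hpq : p ≠ q := fun h =>
      J.ne ((hcactus p).unique ⟨J.isCircuit_left, hp⟩ ⟨J.isCircuit_right, h ▸ hq⟩)
    exact ⟨{p, q}, isCircuit_pair hpq J.left_ne.symm (J.ends_left p hp) (J.ends_right q hq),
      ⟨p, by simp, hp⟩, q, by simp, hq⟩
  · obtain ⟨D, hD, ⟨e₁, he₁D, he₁⟩, e₂, he₂D, he₂⟩ :=
      exists_isCircuit_of_reachable_avoidingGraph hab hba J.left_ne J.right_ne
        ⟨p, J.ends_left p hp⟩ ⟨q, (J.ends_right q hq).trans Sym2.eq_swap⟩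
    exact ⟨D, hD, ⟨e₁, he₁D, J.mem_left hba he₁⟩, e₂, he₂D,
      J.symm.mem_left (Ne.symm hba) (he₂.trans Sym2.eq_swap)⟩

variable [Fintype V]

theorem crossesEdge_avoidingComponent_iff (J : IsJunction ends u a b C₁ C₂)
    (hab : ¬ (avoidingGraph ends u).Reachable a b) {e : E} :
    CrossesEdge ends (avoidingComponent ends u a) e ↔ e ∈ C₁ := by
  constructor
  · rintro ⟨z, z', hzz, hz, hz'⟩
    have hu : u ∈ ends e := by
      by_contra hu
      exact hz' (mem_avoidingComponent_of_mem hz hu hzz)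
    refine (J.mem_or_mem e hu).resolve_right fun he => ?_
    rw [J.ends_right e he, Sym2.eq_iff] at hzz
    rcases hzz with ⟨rfl, -⟩ | ⟨-, rfl⟩
    · exact not_mem_avoidingComponent J.left_ne hz
    · exact hab (mem_avoidingComponent.1 hz)
  · intro he
    exact ⟨a, u, (J.ends_left e he).trans Sym2.eq_swap, mem_avoidingComponent_self,
      not_mem_avoidingComponent J.left_ne⟩

variable [Fintype E]

theorem isMinCut_avoidingComponent (J : IsJunction ends u a b C₁ C₂)
    (hab : ¬ (avoidingGraph ends u).Reachable a b) :
    IsMinCut ends (avoidingComponent ends u a) := by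
  refine ⟨ne_empty_of_mem mem_avoidingComponent_self,
    fun h => not_mem_avoidingComponent J.left_ne (h ▸ mem_univ u), ?_⟩
  rw [cutDeg, ← J.card_left]
  congr 1
  ext e
  simp [J.crossesEdge_avoidingComponent_iff hab]

theorem compl_insert_avoidingComponent (h2ec : IsTwoEdgeConnected ends)
    (J : IsJunction ends u a b C₁ C₂) (hab : ¬ (avoidingGraph ends u).Reachable a b) :
    (insert u (avoidingComponent ends u a))ᶜ = avoidingComponent ends u b := by
  have huniv : insert u (avoidingComponent ends u a ∪ avoidingComponent ends u b) = univ := by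
    refine eq_univ_of_forall_not_crossesEdge h2ec (insert_nonempty _ _) ?_
    rintro e ⟨z, z', hzz, hz, hz'⟩
    simp only [mem_insert, mem_union, not_or] at hz hz'
    by_cases hu : u ∈ ends e
    · rcases J.mem_or_mem e hu with he | he
      · rw [J.ends_left e he, Sym2.eq_iff] at hzz
        rcases hzz with ⟨-, rfl⟩ | ⟨rfl, -⟩
        exacts [hz'.2.1 mem_avoidingComponent_self, hz'.1 rfl]
      · rw [J.ends_right e he, Sym2.eq_iff] at hzz
        rcases hzz with ⟨-, rfl⟩ | ⟨rfl, -⟩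
        exacts [hz'.2.2 mem_avoidingComponent_self, hz'.1 rfl]
    · rcases hz with rfl | hz | hz
      · exact hu (hzz ▸ Sym2.mem_mk_left _ _)
      · exact hz'.2.1 (mem_avoidingComponent_of_mem hz hu hzz)
      · exact hz'.2.2 (mem_avoidingComponent_of_mem hz hu hzz)
  ext w
  simp only [mem_compl, mem_insert, not_or]
  constructor
  · rintro ⟨hwu, hwa⟩
    have hw := mem_univ w
    rw [← huniv] at hw
    simpa [hwu, hwa] using hw
  · intro hw
    exact ⟨fun h => not_mem_avoidingComponent J.right_ne (h ▸ hw),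
      not_mem_avoidingComponent_of_not_reachable hab hw⟩

theorem eq_compl (h2ec : IsTwoEdgeConnected ends) (J : IsJunction ends u a b C₁ C₂)
    (hab : ¬ (avoidingGraph ends u).Reachable a b) {X : Finset V} (hX : IsMinCut ends X)
    (huX : u ∈ X) (haX : a ∉ X) : X = (avoidingComponent ends u a)ᶜ := by
  have hC₁ : ∀ e ∈ C₁, CrossesEdge ends X e := fun e he => ⟨u, a, J.ends_left e he, huX, haX⟩
  have havoid : ∀ e, u ∉ ends e → ¬ CrossesEdge ends X e := fun e hu he =>
    hu ((J.ends_left e (hX.mem_of_crossesEdge hC₁ J.card_left he)).symm ▸ Sym2.mem_mk_left _ _)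
  have hbX : b ∈ X := by
    obtain ⟨q, hq⟩ := card_pos.1 (J.card_right ▸ two_pos : 0 < C₂.card)
    by_contra hbX
    have hqC₁ := hX.mem_of_crossesEdge hC₁ J.card_left ⟨u, b, J.ends_right q hq, huX, hbX⟩
    rw [Sym2.congr_right.1 ((J.ends_left q hqC₁).symm.trans (J.ends_right q hq))] at hab
    exact hab .rfl
  ext w
  rw [mem_compl]
  constructor
  · intro hwX hwA
    exact haX (mem_of_reachable_of_forall_not_crossesEdge havoid
      (mem_avoidingComponent.1 hwA).symm hwX)
  · intro hwA
    by_cases hwu : w = u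
    · exact hwu ▸ huX
    · have hwB : w ∈ avoidingComponent ends u b := by
        rw [← J.compl_insert_avoidingComponent h2ec hab]
        simp [hwu, hwA]
      exact mem_of_reachable_of_forall_not_crossesEdge havoid (mem_avoidingComponent.1 hwB) hbX

theorem mem_of_not_subset (h2ec : IsTwoEdgeConnected ends) (J : IsJunction ends u a b C₁ C₂)
    (hab : ¬ (avoidingGraph ends u).Reachable a b) {X : Finset V} (hX : IsMinCut ends X)
    (huX : u ∈ X) (hB : ¬ avoidingComponent ends u b ⊆ X) : a ∈ X := by
  by_contra haX
  refine hB fun w hw => ?_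
  rw [J.eq_compl h2ec hab hX huX haX, mem_compl]
  exact not_mem_avoidingComponent_of_not_reachable hab hw

theorem subset_or_subset (h2ec : IsTwoEdgeConnected ends) (hcactus : HasUniqueCircuit ends)
    (J : IsJunction ends u a b C₁ C₂) {X : Finset V} (hX : IsMinCut ends X) (huX : u ∈ X) :
    avoidingComponent ends u a ⊆ X ∨ avoidingComponent ends u b ⊆ X := by
  have hab := J.not_reachable hcactus
  have hdisj := fun w => not_mem_avoidingComponent_of_not_reachable (w := w) hab
  by_contra! h
  obtain ⟨hA, hB⟩ := h
  have haX := J.mem_of_not_subset h2ec hab hX huX hB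
  have hbX := J.symm.mem_of_not_subset h2ec (fun h => hab h.symm) hX huX hA
  obtain ⟨w₁, hw₁, hw₁X⟩ := not_subset.1 hA
  obtain ⟨w₂, hw₂, hw₂X⟩ := not_subset.1 hB
  obtain ⟨g₁, hg₁u, hg₁X, hg₁A⟩ := exists_crossesEdge_of_mem_avoidingComponent haX hw₁ hw₁X
  obtain ⟨g₂, -, hg₂X, hg₂B⟩ := exists_crossesEdge_of_mem_avoidingComponent hbX hw₂ hw₂X
  obtain ⟨z₁, hz₁⟩ : ∃ z, z ∈ ends g₁ := ⟨_, Sym2.out_fst_mem _⟩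
  obtain ⟨z₂, hz₂⟩ : ∃ z, z ∈ ends g₂ := ⟨_, Sym2.out_fst_mem _⟩
  have hne : g₁ ≠ g₂ := by
    rintro rfl
    exact hdisj z₁ (hg₂B z₁ hz₁) (hg₁A z₁ hz₁)
  -- the circuit through `g₁` crosses `X` a second time, necessarily at `g₂`, so it leaves the
  -- side of `a` through an edge of `C₁`
  obtain ⟨D, ⟨hD, hg₁D⟩, -⟩ := hcactus g₁
  obtain ⟨g, hgD, hgne, hgX⟩ := hD.exists_ne_crossesEdge hg₁D hg₁X
  have hg : g = g₂ := by
    have := hX.mem_of_crossesEdge (C := {g₁, g₂}) (by simp [hg₁X, hg₂X]) (card_pair hne) hgX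
    simpa [hgne] using this
  subst hg
  obtain ⟨e, heD, he⟩ :=
    hD.exists_crossesEdge hg₁D hgD hz₁ hz₂ (hg₁A z₁ hz₁) (hdisj z₂ (hg₂B z₂ hz₂))
  have hDC₁ : D = C₁ := (hcactus e).unique ⟨hD, heD⟩
    ⟨J.isCircuit_left, (J.crossesEdge_avoidingComponent_iff hab).1 he⟩
  exact hg₁u (by rw [J.ends_left g₁ (hDC₁ ▸ hg₁D)]; exact Sym2.mem_mk_left _ _)

theorem isSide (h2ec : IsTwoEdgeConnected ends) (hcactus : HasUniqueCircuit ends)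
    (J : IsJunction ends u a b C₁ C₂) : IsSide ends u a (avoidingComponent ends u a) := by
  have hab := J.not_reachable hcactus
  have hcompl := J.compl_insert_avoidingComponent h2ec hab
  exact ⟨mem_avoidingComponent_self, not_mem_avoidingComponent J.left_ne,
    J.isMinCut_avoidingComponent hab,
    hcompl ▸ J.symm.isMinCut_avoidingComponent fun h => hab h.symm,
    fun X hX huX haX => J.eq_compl h2ec hab hX huX haX,
    fun X hX huX => hcompl ▸ J.subset_or_subset h2ec hcactus hX huX⟩

end IsJunction

theorem exists_isSide_mem [Fintype V] [Fintype E] [Nontrivial V]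
    (h2ec : IsTwoEdgeConnected ends) (hcactus : HasUniqueCircuit ends) {u v : V}
    (hu : ¬ IsCornerNode ends u) (hv : v ≠ u) : ∃ a A, IsSide ends u a A ∧ v ∈ A := by
  obtain ⟨a, b, C₁, C₂, J⟩ := exists_isJunction_of_not_isCornerNode h2ec hcactus hu
  by_cases hvA : v ∈ avoidingComponent ends u a
  · exact ⟨a, _, J.isSide h2ec hcactus, hvA⟩
  · refine ⟨b, _, J.symm.isSide h2ec hcactus, ?_⟩
    rw [← J.compl_insert_avoidingComponent h2ec (J.not_reachable hcactus)]
    simp [hv, hvA]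

theorem sum_sdiff_union_le {ι M : Type*} [DecidableEq ι] [AddCommMonoid M] [PartialOrder M]
    [CanonicallyOrderedAdd M] [IsOrderedAddMonoid M] {F S N : Finset ι} (f : ι → M)
    (hS : S ⊆ F) (h : ∑ i ∈ N, f i ≤ ∑ i ∈ S, f i) : ∑ i ∈ F \ S ∪ N, f i ≤ ∑ i ∈ F, f i :=
  calc ∑ i ∈ F \ S ∪ N, f i ≤ ∑ i ∈ F \ S ∪ N, f i + ∑ i ∈ F \ S ∩ N, f i := le_self_add
    _ = ∑ i ∈ F \ S, f i + ∑ i ∈ N, f i := sum_union_inter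
    _ ≤ ∑ i ∈ F \ S, f i + ∑ i ∈ S, f i := add_le_add_right h _
    _ = ∑ i ∈ F, f i := sum_sdiff hS

theorem sum_sdiff_union_lt {ι M : Type*} [DecidableEq ι] [AddCommMonoid M] [PartialOrder M]
    [CanonicallyOrderedAdd M] [IsOrderedCancelAddMonoid M] {F S N : Finset ι} (f : ι → M)
    (hS : S ⊆ F) (h : ∑ i ∈ N, f i < ∑ i ∈ S, f i) : ∑ i ∈ F \ S ∪ N, f i < ∑ i ∈ F, f i :=
  calc ∑ i ∈ F \ S ∪ N, f i ≤ ∑ i ∈ F \ S ∪ N, f i + ∑ i ∈ F \ S ∩ N, f i := le_self_add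
    _ = ∑ i ∈ F \ S, f i + ∑ i ∈ N, f i := sum_union_inter
    _ < ∑ i ∈ F \ S, f i + ∑ i ∈ S, f i := add_lt_add_right h _
    _ = ∑ i ∈ F, f i := sum_sdiff hS

section Exchange

variable [Fintype V] [Fintype E]

noncomputable def nonCorner (ends : E → Sym2 V) (x : V) : ℕ :=
  if IsCornerNode ends x then 0 else 1

noncomputable def coveredCuts (ends : E → Sym2 V) (l : V × V × ℕ) : Finset (Finset V) :=
  univ.filter fun X => IsMinCut ends X ∧ Covers l X

noncomputable def linkPotential (ends : E → Sym2 V) (l : V × V × ℕ) : ℕ :=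
  nonCorner ends l.1 + nonCorner ends l.2.1 + (coveredCuts ends l).card

noncomputable def potential (ends : E → Sym2 V) (F : Finset (V × V × ℕ)) : ℕ :=
  ∑ l ∈ F, linkPotential ends l

def IsImprovement (ends : E → Sym2 V) (p : ℕ) (c : V → V → ℕ → ℝ≥0∞)
    (F F' : Finset (V × V × ℕ)) : Prop :=
  Feasible ends p F' ∧ linkCost c F' ≤ linkCost c F ∧ potential ends F' < potential ends F

variable {l l' : V × V × ℕ} {u v y a : V} {A : Finset V}

theorem mem_coveredCuts {X : Finset V} :
    X ∈ coveredCuts ends l ↔ IsMinCut ends X ∧ Covers l X := by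
  simp [coveredCuts]

theorem linkPotential_eq_of_ends (h : s(l.1, l.2.1) = s(u, v)) :
    linkPotential ends l = nonCorner ends u + nonCorner ends v + (coveredCuts ends l).card := by
  rcases Sym2.eq_iff.1 h with ⟨h₁, h₂⟩ | ⟨h₁, h₂⟩
  · rw [linkPotential, h₁, h₂]
  · rw [linkPotential, h₁, h₂, add_comm (nonCorner ends v)]

theorem covers_of_covers_or_covers (hlu : s(l.1, l.2.1) = s(u, v))
    (hl'u : s(l'.1, l'.2.1) = s(u, y)) (hsep : ∀ X, IsMinCut ends X → u ∈ X → v ∈ X ∨ y ∈ X)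
    (t : ℕ) (X : Finset V) (hX : IsMinCut ends X) :
    Covers l X ∨ Covers l' X → Covers (y, v, t) X := by
  refine forall_isMinCut_of_mem u (P := fun X => Covers l X ∨ Covers l' X → Covers (y, v, t) X)
    (fun X h hlX => ?_) (fun X hX huX => ?_) X hX
  · simpa only [covers_compl] using h (by simpa only [covers_compl] using hlX)
  · have := hsep X hX huX
    rw [covers_iff_of_ends hlu, covers_iff_of_ends hl'u, covers_def]
    simp only [Xor]
    tauto

theorem coveredCuts_subset_union (hlu : s(l.1, l.2.1) = s(u, v))
    (hl'u : s(l'.1, l'.2.1) = s(u, y)) (t : ℕ) :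
    coveredCuts ends (y, v, t) ⊆ coveredCuts ends l ∪ coveredCuts ends l' := by
  intro X hX
  obtain ⟨hX, hmX⟩ := mem_coveredCuts.1 hX
  rw [mem_union, mem_coveredCuts, mem_coveredCuts, covers_iff_of_ends hlu,
    covers_iff_of_ends hl'u]
  rw [covers_def] at hmX
  simp only [Xor] at hmX ⊢
  tauto

namespace IsSide

theorem isShadow (hA : IsSide ends u a A) (hvA : v ∈ A) (hlu : s(l.1, l.2.1) = s(u, v)) :
    IsShadow ends (a, v, l.2.2) l := by
  refine ⟨le_rfl, forall_isMinCut_of_mem u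
    (fun X h hmX => covers_compl.1 (h (covers_compl.2 hmX))) fun X hX huX hmX => ?_⟩
  rw [covers_def] at hmX
  rw [covers_iff_of_ends hlu]
  by_cases haX : a ∈ X
  · simp only [Xor] at hmX ⊢
    tauto
  · rw [hA.eq_compl X hX huX haX] at hmX
    simp [Xor, hA.mem, hvA] at hmX

theorem covers_or_covers (hA : IsSide ends u a A) (hlu : s(l.1, l.2.1) = s(u, v))
    (hl'A : Covers l' A) (t : ℕ) (X : Finset V) (hX : IsMinCut ends X) :
    Covers l X → Covers (a, v, t) X ∨ Covers l' X := by
  refine forall_isMinCut_of_mem u (P := fun X => Covers l X → Covers (a, v, t) X ∨ Covers l' X)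
    (fun X h hlX => ?_) (fun X hX huX hlX => ?_) X hX
  · simpa only [covers_compl] using h (covers_compl.2 hlX)
  rw [covers_iff_of_ends hlu] at hlX
  have hvX : v ∉ X := by simp only [Xor] at hlX; tauto
  by_cases haX : a ∈ X
  · exact Or.inl (Or.inl ⟨haX, hvX⟩)
  · rw [hA.eq_compl X hX huX haX, covers_compl, covers_compl]
    exact Or.inr hl'A

end IsSide

variable {p : ℕ} {c : V → V → ℕ → ℝ≥0∞} {F : Finset (V × V × ℕ)}

theorem exists_isImprovement_of_exchange {S N : Finset (V × V × ℕ)} (hF : Feasible ends p F)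
    (hS : S ⊆ F) (hN : ∀ l ∈ N, ValidLink p l) (hweight : ∑ l ∈ N, l.2.2 ≤ ∑ l ∈ S, l.2.2)
    (hcost : linkCost c N ≤ linkCost c S) (hpot : potential ends N < potential ends S)
    (hcov : ∀ X, IsMinCut ends X → ∀ l ∈ S, Covers l X → ∃ l' ∈ F \ S ∪ N, Covers l' X) :
    ∃ F', IsImprovement ends p c F F' := by
  refine ⟨F \ S ∪ N, ⟨fun l hl => ?_, (sum_sdiff_union_le _ hS hweight).trans hF.2.1,
    fun X hX => ?_⟩, sum_sdiff_union_le _ hS hcost, sum_sdiff_union_lt _ hS hpot⟩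
  · rcases mem_union.1 hl with hl | hl
    exacts [hF.1 l (mem_sdiff.1 hl).1, hN l hl]
  · obtain ⟨l, hl, hlX⟩ := hF.2.2 X hX
    by_cases hlS : l ∈ S
    · exact hcov X hX l hlS hlX
    · exact ⟨l, mem_union_left _ (mem_sdiff.2 ⟨hl, hlS⟩), hlX⟩

theorem exists_isImprovement_merge (hsymm : ∀ u v t, c u v t = c v u t)
    (hmetric : IsMetricInstance ends p c) (hF : Feasible ends p F) (hl : l ∈ F) (hl' : l' ∈ F)
    (hne : l ≠ l') (hlu : s(l.1, l.2.1) = s(u, v)) (hl'u : s(l'.1, l'.2.1) = s(u, y))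
    (hyv : y ≠ v) (hu : ¬ IsCornerNode ends u)
    (hsep : ∀ X, IsMinCut ends X → u ∈ X → v ∈ X ∨ y ∈ X) :
    ∃ F', IsImprovement ends p c F F' := by
  have hweight : l.2.2 + l'.2.2 ≤ p := by
    have := (sum_le_sum_of_subset (f := fun l : V × V × ℕ => l.2.2)
      (insert_subset hl (singleton_subset_iff.2 hl'))).trans hF.2.1
    rwa [sum_pair hne] at this
  refine exists_isImprovement_of_exchange (S := {l, l'}) (N := {(y, v, l.2.2 + l'.2.2)}) hF
    (insert_subset hl (singleton_subset_iff.2 hl')) ?_ (by simp [sum_pair hne]) ?_ ?_ ?_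
  · simpa using ⟨hyv, Nat.le_add_right_of_le (hF.1 l hl).2.1, hweight⟩
  · rw [linkCost, linkCost, sum_singleton, sum_pair hne, cost_eq_of_ends hsymm hlu,
      cost_eq_of_ends hsymm hl'u, hsymm u y, add_comm (c u v _)]
    -- triangle inequality through `u`
    exact hmetric.2 y u v _ _ _ ((hF.1 l' hl').ne_of_ends hl'u).symm
      ((hF.1 l hl).ne_of_ends hlu) hyv (hF.1 l' hl').2.1 (hF.1 l hl).2.1 hweight
      (add_comm _ _).le
  · have hcard := (card_le_card (coveredCuts_subset_union (ends := ends) hlu hl'u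
      (l.2.2 + l'.2.2))).trans (card_union_le _ _)
    simp only [potential, sum_singleton, sum_pair hne]
    rw [linkPotential_eq_of_ends hlu, linkPotential_eq_of_ends hl'u,
      linkPotential_eq_of_ends (l := (y, v, _)) rfl]
    simp only [nonCorner, if_neg hu] at hcard ⊢
    omega
  · intro X hX g hg hgX
    refine ⟨_, mem_union_right _ (mem_singleton_self _),
      covers_of_covers_or_covers hlu hl'u hsep _ X hX ?_⟩
    rcases mem_insert.1 hg with rfl | hg
    · exact Or.inl hgX
    · exact Or.inr (mem_singleton.1 hg ▸ hgX)

theorem exists_isImprovement_drop (hF : Feasible ends p F) (hl : l ∈ F) (hl' : l' ∈ F)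
    (hne : l ≠ l') (hlu : s(l.1, l.2.1) = s(u, v)) (hu : ¬ IsCornerNode ends u)
    (hA : IsSide ends u v A) (hl'A : Covers l' A) : ∃ F', IsImprovement ends p c F F' := by
  refine exists_isImprovement_of_exchange (S := {l}) (N := ∅) hF (singleton_subset_iff.2 hl)
    (by simp) (by simp) (by simp [linkCost]) ?_ fun X hX g hg hgX => ?_
  · simp only [potential, sum_empty, sum_singleton, linkPotential_eq_of_ends hlu, nonCorner,
      if_neg hu]
    omega
  · rw [mem_singleton.1 hg] at hgX
    refine ⟨l', mem_union_left _ (mem_sdiff.2 ⟨hl', by simpa using hne.symm⟩), ?_⟩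
    -- the link `(v, v, _)` covers nothing
    simpa [covers_def, Xor] using hA.covers_or_covers hlu hl'A 0 X hX hgX

theorem exists_isImprovement_shadow (hmetric : IsMetricInstance ends p c)
    (hF : Feasible ends p F) (hl : l ∈ F) (hl' : l' ∈ F) (hne : l ≠ l')
    (hlu : s(l.1, l.2.1) = s(u, v)) (hu : ¬ IsCornerNode ends u) (hav : a ≠ v)
    (hA : IsSide ends u a A) (hvA : v ∈ A) (hl'A : Covers l' A) :
    ∃ F', IsImprovement ends p c F F' := by
  have hvalid : ValidLink p (a, v, l.2.2) := ⟨hav, (hF.1 l hl).2⟩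
  have hshadow := hA.isShadow hvA hlu
  have hlt : (coveredCuts ends (a, v, l.2.2)).card < (coveredCuts ends l).card := by
    refine card_lt_card ⟨fun X hX => ?_, fun h => ?_⟩
    · obtain ⟨hX, hmX⟩ := mem_coveredCuts.1 hX
      exact mem_coveredCuts.2 ⟨hX, hshadow.2 X hX hmX⟩
    · have hAl : A ∈ coveredCuts ends l :=
        mem_coveredCuts.2 ⟨hA.isMinCut, (covers_iff_of_ends hlu).2 (Or.inr ⟨hvA, hA.not_mem⟩)⟩
      have hAm := (mem_coveredCuts.1 (h hAl)).2
      simp [covers_def, Xor, hA.mem, hvA] at hAm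
  refine exists_isImprovement_of_exchange (S := {l}) (N := {(a, v, l.2.2)}) hF
    (singleton_subset_iff.2 hl) (by simpa using hvalid) (by simp) ?_ ?_ fun X hX g hg hgX => ?_
  · simpa [linkCost] using hmetric.1 l _ (hF.1 l hl) hvalid hshadow
  · simp only [potential, sum_singleton]
    rw [linkPotential_eq_of_ends hlu, linkPotential_eq_of_ends (l := (a, v, _)) rfl]
    simp only [nonCorner, if_neg hu]
    split_ifs <;> omega
  · rw [mem_singleton.1 hg] at hgX
    rcases hA.covers_or_covers hlu hl'A l.2.2 X hX hgX with h | h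
    · exact ⟨_, mem_union_right _ (mem_singleton_self _), h⟩
    · exact ⟨l', mem_union_left _ (mem_sdiff.2 ⟨hl', by simpa using hne.symm⟩), h⟩

theorem exists_isImprovement_of_isSide (hsymm : ∀ u v t, c u v t = c v u t)
    (hmetric : IsMetricInstance ends p c) (hF : Feasible ends p F) (hl : l ∈ F)
    (hlu : s(l.1, l.2.1) = s(u, v)) (hu : ¬ IsCornerNode ends u) (hA : IsSide ends u a A)
    (hvA : v ∈ A) : ∃ F', IsImprovement ends p c F F' := by
  obtain ⟨l', hl', hl'B⟩ := hF.2.2 _ hA.isMinCut_compl_insert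
  have hne : l ≠ l' := by
    rintro rfl
    rw [covers_iff_of_ends hlu] at hl'B
    simp [Xor, hvA] at hl'B
  obtain ⟨x, y, hl'xy, hxB, hyB⟩ := exists_ends_of_covers hl'B
  simp only [mem_compl, mem_insert, not_not] at hxB
  simp only [mem_compl, mem_insert, not_or] at hyB
  rcases hxB with rfl | hxA
  · refine exists_isImprovement_merge hsymm hmetric hF hl hl' hne hlu hl'xy
      (fun h => hyB.2 (h ▸ hvA)) hu fun X hX huX => ?_
    rcases hA.subset_or_subset X hX huX with h | h
    · exact Or.inl (h hvA)
    · exact Or.inr (h (by simpa using hyB))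
  · have hl'A : Covers l' A := (covers_iff_of_ends hl'xy).2 (Or.inl ⟨hxA, hyB.2⟩)
    rcases eq_or_ne a v with rfl | hav
    · exact exists_isImprovement_drop hF hl hl' hne hlu hu hA hl'A
    · exact exists_isImprovement_shadow hmetric hF hl hl' hne hlu hu hav hA hvA hl'A

theorem exists_isImprovement (h2ec : IsTwoEdgeConnected ends) (hcactus : HasUniqueCircuit ends)
    (hsymm : ∀ u v t, c u v t = c v u t) (hmetric : IsMetricInstance ends p c)
    (hF : Feasible ends p F) (hl : l ∈ F)
    (hnc : ¬ (IsCornerNode ends l.1 ∧ IsCornerNode ends l.2.1)) :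
    ∃ F', IsImprovement ends p c F F' := by
  obtain ⟨u, v, hlu, hu⟩ : ∃ u v, s(l.1, l.2.1) = s(u, v) ∧ ¬ IsCornerNode ends u := by
    rcases not_and_or.1 hnc with h | h
    exacts [⟨_, _, rfl, h⟩, ⟨_, _, Sym2.eq_swap, h⟩]
  have hvu : v ≠ u := ((hF.1 l hl).ne_of_ends hlu).symm
  have : Nontrivial V := nontrivial_of_ne v u hvu
  obtain ⟨a, A, hA, hvA⟩ := exists_isSide_mem h2ec hcactus hu hvu
  exact exists_isImprovement_of_isSide hsymm hmetric hF hl hlu hu hA hvA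

theorem finite_setOf_feasible (ends : E → Sym2 V) (p : ℕ) :
    {F | Feasible ends p F}.Finite :=
  (univ ×ˢ univ ×ˢ range (p + 1) : Finset (V × V × ℕ)).powerset.finite_toSet.subset
    fun F hF => mem_coe.2 (mem_powerset.2 fun l hl => by
      simpa [Nat.lt_succ_iff] using (hF.1 l hl).2.2)

theorem exists_optimal (hfeas : ∃ F, Feasible ends p F) :
    {F | Feasible ends p F ∧ ∀ F', Feasible ends p F' → linkCost c F ≤ linkCost c F'}.Nonempty := by
  obtain ⟨F, hF, hmin⟩ :=
    Set.exists_min_image _ (linkCost c) (finite_setOf_feasible ends p) hfeas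
  exact ⟨F, hF, hmin⟩

end Exchange

end

theorem exists_optimal_on_corners_cactus_general {V E : Type*} [Fintype V] [Fintype E]
    (ends : E → Sym2 V)
    (h2ec : ∀ X : Finset V, X ≠ ∅ → X ≠ Finset.univ → 2 ≤ cutDeg ends X)
    (hcactus : ∀ e : E, ∃! C : Finset E, IsCircuit ends C ∧ e ∈ C)
    (p : ℕ) (c : V → V → ℕ → ℝ≥0∞) (hsymm : ∀ u v t, c u v t = c v u t)
    (hmetric : IsMetricInstance ends p c)
    (hfeas : ∃ F : Finset (V × V × ℕ), Feasible ends p F) :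
    ∃ F : Finset (V × V × ℕ), Feasible ends p F ∧
      (∀ F' : Finset (V × V × ℕ), Feasible ends p F' →
        linkCost c F ≤ linkCost c F') ∧
      ∀ l ∈ F, IsCornerNode ends l.1 ∧ IsCornerNode ends l.2.1 := by
  obtain ⟨F, ⟨hF, hopt⟩, hmin⟩ := Set.exists_min_image _ (potential ends)
    ((finite_setOf_feasible ends p).subset fun _ h => h.1) (exists_optimal (c := c) hfeas)
  refine ⟨F, hF, hopt, fun l hl => by_contra fun hnc => ?_⟩
  obtain ⟨F', hF', hcost, hpot⟩ := exists_isImprovement h2ec hcactus hsymm hmetric hF hl hnc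
  exact (hmin F' ⟨hF', fun F'' hF'' => hcost.trans (hopt F'' hF'')⟩).not_gt hpot

/-- For a metric weighted link instance on a cactus that admits a feasible link set,
there is an optimal (minimum-cost feasible) link set all of whose links are incident
only to corner nodes. -/
theorem exists_optimal_on_corners_cactus {V E : Type*} [Fintype V] [Fintype E]
    (ends : E → Sym2 V) (hloopless : ∀ e : E, ¬ (ends e).IsDiag)
    (hV : 2 ≤ Fintype.card V)
    (h2ec : ∀ X : Finset V, X ≠ ∅ → X ≠ Finset.univ → 2 ≤ cutDeg ends X)
    (hcactus : ∀ e : E, ∃! C : Finset E, IsCircuit ends C ∧ e ∈ C)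
    (p : ℕ) (c : V → V → ℕ → ℝ≥0∞) (hsymm : ∀ u v t, c u v t = c v u t)
    (hmetric : IsMetricInstance ends p c)
    (hfeas : ∃ F : Finset (V × V × ℕ), Feasible ends p F) :
    ∃ F : Finset (V × V × ℕ), Feasible ends p F ∧
      (∀ F' : Finset (V × V × ℕ), Feasible ends p F' →
        linkCost c F ≤ linkCost c F') ∧
      ∀ l ∈ F, IsCornerNode ends l.1 ∧ IsCornerNode ends l.2.1 :=
  exists_optimal_on_corners_cactus_general ends h2ec hcactus p c hsymm hmetric hfeas
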